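/- Let x be a sequence of real numbers. Then the set of ω ∈ (0,1] such that the statistical limit points of the subsequence x↾ω equal the statistical limit points of x is comeager if and only if it is nonmeager, if and only if every ordinary limit point of x is a statistical limit point of x. -/

import Mathlib

open Filter Topology Set MeasureTheory
open scoped ENNReal

noncomputable section

/-- An ideal on ℕ: contains all finite sets, closed under subsets and finite
unions, and does not contain ℕ itself. -/
def IsIdealOn (I : Set (Set ℕ)) : Prop :=
  (∀ ⦃A B : Set ℕ⦄, A ⊆ B → B ∈ I → A ∈ I) ∧
  (∀ ⦃A B : Set ℕ⦄, A ∈ I → B ∈ I → A ∪ B ∈ I) ∧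
  (∀ A : Set ℕ, A.Finite → A ∈ I) ∧
  (Set.univ : Set ℕ) ∉ I

/-- `l` is an `I`-cluster point of the sequence `x`. -/
def IdealClusterPt {X : Type*} [TopologicalSpace X] (I : Set (Set ℕ)) (x : ℕ → X) (l : X) : Prop :=
  ∀ U ∈ 𝓝 l, {n | x n ∈ U} ∉ I

/-- `l` is an `I`-limit point of the sequence `x`. -/
def IdealLimitPt {X : Type*} [TopologicalSpace X] (I : Set (Set ℕ)) (x : ℕ → X) (l : X) : Prop :=
  ∃ k : ℕ → ℕ, StrictMono k ∧ Tendsto (x ∘ k) atTop (𝓝 l) ∧ Set.range k ∉ I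

/-- Ordinary limit points of a sequence. -/
def limitPts {X : Type*} [TopologicalSpace X] (x : ℕ → X) : Set X :=
  {l | ∃ k : ℕ → ℕ, StrictMono k ∧ Tendsto (x ∘ k) atTop (𝓝 l)}

/-- The `i`-th digit (0-indexed; representing `d_{i+1}`) of the non-terminating
dyadic expansion of `ω ∈ (0,1]`. -/
def dyadicDigit (ω : ℝ) (i : ℕ) : ℤ :=
  ⌈(2:ℝ) ^ (i + 1) * ω⌉ - 2 * ⌈(2:ℝ) ^ i * ω⌉ + 1

/-- The subsequence `x↾ω` of `x` keeping `x i` iff the dyadic digit of `ω` at `i` is `1`. -/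
def subseq {X : Type*} (x : ℕ → X) (ω : ℝ) : ℕ → X :=
  fun k => x (Nat.nth (fun i => dyadicDigit ω i = 1) k)

open Classical in
/-- Characteristic-function embedding of `P(ℕ)` into Cantor space. -/
def chi (A : Set ℕ) : ℕ → Bool := fun n => if n ∈ A then true else false

def IsFsigma {α : Type*} [TopologicalSpace α] (s : Set α) : Prop :=
  ∃ F : ℕ → Set α, (∀ n, IsClosed (F n)) ∧ s = ⋃ n, F n

def IsFsigmaDelta {α : Type*} [TopologicalSpace α] (s : Set α) : Prop :=
  ∃ F : ℕ → Set α, (∀ n, IsFsigma (F n)) ∧ s = ⋂ n, F n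

/-- `I` is `F_σ`-separated from its dual filter. -/
def FsigmaSeparated (I : Set (Set ℕ)) : Prop :=
  ∃ A : Set (ℕ → Bool), IsFsigma A ∧ chi '' I ⊆ A ∧ A ∩ chi '' {S : Set ℕ | Sᶜ ∈ I} = ∅

/-- A submeasure on ℕ. -/
def IsSubmeasureOn (φ : Set ℕ → ℝ≥0∞) : Prop :=
  φ ∅ = 0 ∧ (∀ ⦃A B : Set ℕ⦄, A ⊆ B → φ A ≤ φ B) ∧
    (∀ A B : Set ℕ, φ (A ∪ B) ≤ φ A + φ B) ∧ ∀ n : ℕ, φ {n} ≠ ⊤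

/-- A partition of ℕ into nonempty finite sets. -/
def IsFinPartition (P : ℕ → Set ℕ) : Prop :=
  (∀ n, (P n).Finite ∧ (P n).Nonempty) ∧ (⋃ n, P n) = Set.univ ∧
    Pairwise (Function.onFun Disjoint P)

/-- The generalized density ideal determined by `(P n)` and `(μ n)`. -/
def Zmu (P : ℕ → Set ℕ) (μ : ℕ → Set ℕ → ℝ≥0∞) : Set (Set ℕ) :=
  {A | Tendsto (fun n => μ n (A ∩ P n)) atTop (𝓝 0)}

def IsGenDensityIdeal (I : Set (Set ℕ)) : Prop :=
  ∃ (P : ℕ → Set ℕ) (μ : ℕ → Set ℕ → ℝ≥0∞), IsFinPartition P ∧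
    (∀ n, IsSubmeasureOn (μ n)) ∧ (∀ n A, μ n A = μ n (A ∩ P n)) ∧
    Filter.limsup (fun n => μ n (P n)) atTop ≠ 0 ∧ I = Zmu P μ

/-- Exhaustive ideal of a submeasure. -/
def Exh (φ : Set ℕ → ℝ≥0∞) : Set (Set ℕ) :=
  {A | Tendsto (fun n => φ (A \ Set.Iio n)) atTop (𝓝 0)}

open Classical in
/-- The ideal `I_α`. -/
def Ialpha (α : ℝ) : Set (Set ℕ) :=
  {A | (fun n => ∑ i ∈ Finset.Icc 1 n, if i ∈ A then (i:ℝ) ^ α else 0)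
      =o[atTop] (fun n => ∑ i ∈ Finset.Icc 1 n, (i:ℝ) ^ α)}

open Classical in
/-- The ideal of natural density zero sets. -/
def densityZero : Set (Set ℕ) :=
  {A | Tendsto (fun n : ℕ => (∑ i ∈ Finset.range n, if i ∈ A then (1:ℝ) else 0) / n)
      atTop (𝓝 0)}

open Classical in
def phiEU (f : ℕ → ℝ) (A : Set ℕ) : ℝ :=
  ⨆ n : ℕ, (∑ i ∈ Finset.Icc 1 n, if i ∈ A then f i else 0) / (∑ i ∈ Finset.Icc 1 n, f i)

def ExhReal (φ : Set ℕ → ℝ) : Set (Set ℕ) :=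
  {A | Tendsto (fun n => φ (A \ Set.Iio n)) atTop (𝓝 0)}

def IsErdosUlamIdeal (I : Set (Set ℕ)) : Prop :=
  ∃ f : ℕ → ℝ, (∀ n, 0 < f n) ∧
    Tendsto (fun n => ∑ i ∈ Finset.Icc 1 n, f i) atTop atTop ∧
    (fun n => f n) =o[atTop] (fun n => ∑ i ∈ Finset.Icc 1 n, f i) ∧
    I = ExhReal (phiEU f)

end


/-!
Write `L(x)` for the limit points and `Λ(x)` for the statistical limit points of `x`; always
`Λ(x) ⊆ L(x)` and `L(x↾ω) ⊆ L(x)`. For an infinite set `P` of indices, the `ω` whose digits have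
a block `[a, b)` on which every selected index lies in `P`, with more than twice as many selected
indices in `[a, b)` as below `a`, contain a dense open set: every dyadic interval has a dyadic
subinterval prescribing such a block. For `ω` in the countable intersection over
`P = x⁻¹(B(q, δ))`, `q, δ ∈ ℚ`, blocks chosen for balls shrinking to a limit point `l` give
indices of upper density at least `1/2` along which `x↾ω → l`. So `Λ(x↾ω) = L(x)` for comeager
many `ω`, and `{ω | Λ(x↾ω) = Λ(x)}` is comeager when `Λ(x) = L(x)` and meagre otherwise.
-/

/-- `ω ∈ ((c - 1) / 2 ^ t, c / 2 ^ t]` for `c = dyadicCell t ω`; this level-`t` dyadic interval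
fixes the first `t` digits of `ω`. -/
noncomputable def dyadicCell (t : ℕ) (ω : ℝ) : ℤ := ⌈(2:ℝ) ^ t * ω⌉

section DyadicCell

variable {ω ω₁ ω₂ : ℝ} {t i : ℕ}

theorem dyadicCell_eq_iff {c : ℤ} :
    dyadicCell t ω = c ↔ (c:ℝ) - 1 < 2 ^ t * ω ∧ 2 ^ t * ω ≤ c :=
  Int.ceil_eq_iff

theorem dyadicDigit_eq (ω : ℝ) (i : ℕ) :
    dyadicDigit ω i = dyadicCell (i + 1) ω - 2 * dyadicCell i ω + 1 :=
  rfl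

theorem dyadicCell_succ_mem_Icc (ω : ℝ) (i : ℕ) :
    dyadicCell (i + 1) ω ∈ Icc (2 * dyadicCell i ω - 1) (2 * dyadicCell i ω) := by
  have hdouble : (2:ℝ) ^ (i + 1) * ω = 2 * (2 ^ i * ω) := by ring
  simp only [dyadicCell, hdouble]
  constructor
  · have : ((2 * ⌈(2:ℝ) ^ i * ω⌉ - 2 : ℤ) : ℝ) < 2 * (2 ^ i * ω) := by
      push_cast; linarith [Int.ceil_lt_add_one ((2:ℝ) ^ i * ω)]
    have := Int.lt_ceil.2 this
    omega
  · exact Int.ceil_le.2 (by push_cast; linarith [Int.le_ceil ((2:ℝ) ^ i * ω)])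

theorem dyadicDigit_eq_zero_or_one (ω : ℝ) (i : ℕ) : dyadicDigit ω i = 0 ∨ dyadicDigit ω i = 1 := by
  obtain ⟨hlow, hhigh⟩ := dyadicCell_succ_mem_Icc ω i
  rw [dyadicDigit_eq]
  omega

theorem dyadicCell_eq_ediv_two (ω : ℝ) (i : ℕ) :
    dyadicCell i ω = (dyadicCell (i + 1) ω + 1) / 2 := by
  obtain ⟨hlow, hhigh⟩ := dyadicCell_succ_mem_Icc ω i
  omega

theorem dyadicCell_eq_of_le (h : dyadicCell t ω₂ = dyadicCell t ω₁) (hi : i ≤ t) :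
    dyadicCell i ω₂ = dyadicCell i ω₁ := by
  induction hi using Nat.decreasingInduction with
  | self => exact h
  | of_succ k _ ih => rw [dyadicCell_eq_ediv_two ω₂, dyadicCell_eq_ediv_two ω₁, ih]

theorem dyadicDigit_eq_of_dyadicCell_eq (h : dyadicCell t ω₂ = dyadicCell t ω₁) (hi : i < t) :
    dyadicDigit ω₂ i = dyadicDigit ω₁ i := by
  rw [dyadicDigit_eq, dyadicDigit_eq, dyadicCell_eq_of_le h hi, dyadicCell_eq_of_le h hi.le]

theorem abs_sub_lt_of_dyadicCell_eq (h : dyadicCell t ω₂ = dyadicCell t ω₁) :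
    |ω₂ - ω₁| < (2 ^ t)⁻¹ := by
  obtain ⟨h₂, h₂'⟩ := dyadicCell_eq_iff.1 h
  obtain ⟨h₁, h₁'⟩ := dyadicCell_eq_iff.1 (rfl : dyadicCell t ω₁ = _)
  have hpow : (0:ℝ) < 2 ^ t := by positivity
  have hscaled : |2 ^ t * ω₂ - 2 ^ t * ω₁| < 1 := abs_sub_lt_iff.2 ⟨by linarith, by linarith⟩
  rw [← mul_sub, abs_mul, abs_of_pos hpow] at hscaled
  rw [← one_div, lt_div_iff₀ hpow]
  linarith

theorem mem_Ioc_iff_dyadicCell_zero : ω ∈ Ioc (0:ℝ) 1 ↔ dyadicCell 0 ω = 1 := by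
  simp [dyadicCell_eq_iff]

theorem exists_dyadicCell_eq_dyadicDigit_iff (ω : ℝ) (t : ℕ) (p : Prop) :
    ∃ ω', dyadicCell t ω' = dyadicCell t ω ∧ (dyadicDigit ω' t = 1 ↔ p) := by
  set c := dyadicCell t ω
  have hpow : (0:ℝ) < 2 ^ t := by positivity
  -- the right endpoint of the cell has next digit `1`, its midpoint has next digit `0`
  by_cases hp : p
  · have hc : dyadicCell t (c / 2 ^ t) = c :=
      dyadicCell_eq_iff.2 (by field_simp; constructor <;> linarith)
    have hc' : dyadicCell (t + 1) (c / 2 ^ t) = 2 * c :=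
      dyadicCell_eq_iff.2 (by rw [pow_succ]; field_simp; push_cast; constructor <;> linarith)
    refine ⟨c / 2 ^ t, hc, ?_⟩
    rw [dyadicDigit_eq, hc, hc']
    simp only [hp, iff_true]
    ring
  · have hc : dyadicCell t ((c - 1 / 2) / 2 ^ t) = c :=
      dyadicCell_eq_iff.2 (by field_simp; constructor <;> linarith)
    have hc' : dyadicCell (t + 1) ((c - 1 / 2) / 2 ^ t) = 2 * c - 1 :=
      dyadicCell_eq_iff.2 (by rw [pow_succ]; field_simp; push_cast; constructor <;> linarith)
    refine ⟨(c - 1 / 2) / 2 ^ t, hc, ?_⟩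
    rw [dyadicDigit_eq, hc, hc']
    simp only [hp, iff_false]
    omega

theorem exists_dyadicCell_eq_dyadicDigits_iff (ω : ℝ) (t : ℕ) (p : ℕ → Prop) (n : ℕ) :
    ∃ ω', dyadicCell t ω' = dyadicCell t ω ∧
      ∀ k < n, (dyadicDigit ω' (t + k) = 1 ↔ p (t + k)) := by
  induction n with
  | zero => exact ⟨ω, rfl, fun k hk => absurd hk k.not_lt_zero⟩
  | succ n ih =>
    obtain ⟨ω₁, hcell₁, hdigits₁⟩ := ih
    obtain ⟨ω₂, hcell₂, hdigit₂⟩ := exists_dyadicCell_eq_dyadicDigit_iff ω₁ (t + n) (p (t + n))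
    refine ⟨ω₂, (dyadicCell_eq_of_le hcell₂ (by omega)).trans hcell₁, fun k hk => ?_⟩
    rcases Nat.lt_succ_iff_lt_or_eq.1 hk with hk | rfl
    · rw [dyadicDigit_eq_of_dyadicCell_eq hcell₂ (by omega)]
      exact hdigits₁ k hk
    · exact hdigit₂

end DyadicCell

theorem setOf_dyadicDigit_eq_one_infinite (ω : ℝ) : {i | dyadicDigit ω i = 1}.Infinite := by
  -- `h i ∈ (0, 1]` is the position of `2 ^ i * ω` in its cell, and a digit `0` doubles it.
  set h : ℕ → ℝ := fun i => 2 ^ i * ω - dyadicCell i ω + 1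
  have h_pos : ∀ i, 0 < h i := fun i => by
    have := Int.ceil_lt_add_one ((2:ℝ) ^ i * ω)
    simp only [h, dyadicCell]
    linarith
  have h_le : ∀ i, h i ≤ 1 := fun i => by
    have := Int.le_ceil ((2:ℝ) ^ i * ω)
    simp only [h, dyadicCell]
    linarith
  have h_succ : ∀ i, h (i + 1) = 2 * h i - dyadicDigit ω i := fun i => by
    simp only [h, dyadicDigit_eq]
    push_cast
    ring
  intro hfin
  obtain ⟨N, hN⟩ := hfin.bddAbove
  have h_double : ∀ j, h (N + 1 + j) = 2 ^ j * h (N + 1) := by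
    intro j
    induction j with
    | zero => simp
    | succ j ih =>
      have hzero : dyadicDigit ω (N + 1 + j) = 0 :=
        (dyadicDigit_eq_zero_or_one ω _).resolve_right fun h1 => by
          have := hN h1
          omega
      rw [← add_assoc, h_succ, ih, hzero]
      push_cast
      ring
  obtain ⟨j, hj⟩ := pow_unbounded_of_one_lt (h (N + 1))⁻¹ one_lt_two
  have hgt := mul_lt_mul_of_pos_right hj (h_pos (N + 1))
  rw [inv_mul_cancel₀ (h_pos _).ne', ← h_double] at hgt
  linarith [h_le (N + 1 + j)]

instance : LocallyCompactSpace (Ioc (0:ℝ) 1) := isLocallyClosed_Ioc.locallyCompactSpace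

theorem residual_of_forall_exists_dyadicCell_subset {S : Set ℝ}
    (hS : ∀ ω t, ∃ ω' b, t ≤ b ∧ dyadicCell t ω' = dyadicCell t ω ∧
      ∀ ω'', dyadicCell b ω'' = dyadicCell b ω' → ω'' ∈ S) :
    {ω : Ioc (0:ℝ) 1 | (ω : ℝ) ∈ S} ∈ residual (Ioc (0:ℝ) 1) := by
  refine mem_of_superset (residual_of_dense_open isOpen_interior ?_) interior_subset
  rw [Metric.dense_iff]
  rintro ⟨ω, hω⟩ ε hε
  obtain ⟨t, ht⟩ := exists_pow_lt_of_lt_one hε (by norm_num : (2⁻¹ : ℝ) < 1)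
  obtain ⟨ω', b, htb, hcell, hsub⟩ := hS ω t
  set c := dyadicCell b ω'
  -- the midpoint of the level-`b` cell of `ω'` is an interior point of `S`
  set m : ℝ := (c - 1 / 2) / 2 ^ b
  have hm : 2 ^ b * m = c - 1 / 2 := by
    simp only [m]
    field_simp
  have hm_cell : dyadicCell b m = c := dyadicCell_eq_iff.2 (by rw [hm]; constructor <;> linarith)
  have hm_cell_t : dyadicCell t m = dyadicCell t ω := (dyadicCell_eq_of_le hm_cell htb).trans hcell
  have hm_mem : m ∈ Ioc (0:ℝ) 1 := mem_Ioc_iff_dyadicCell_zero.2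
    ((dyadicCell_eq_of_le hm_cell_t t.zero_le).trans (mem_Ioc_iff_dyadicCell_zero.1 hω))
  refine ⟨⟨m, hm_mem⟩, ?_, ?_⟩
  · rw [Metric.mem_ball, Subtype.dist_eq, Real.dist_eq]
    calc |m - ω| < (2 ^ t)⁻¹ := abs_sub_lt_of_dyadicCell_eq hm_cell_t
      _ = 2⁻¹ ^ t := (inv_pow _ _).symm
      _ < ε := ht
  · rw [mem_interior]
    refine ⟨{z | 2 ^ b * (z : ℝ) ∈ Ioo ((c : ℝ) - 1) c},
      fun z hz => hsub z (dyadicCell_eq_iff.2 ⟨hz.1, hz.2.le⟩),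
      isOpen_Ioo.preimage (continuous_const.mul continuous_subtype_val), ?_⟩
    show 2 ^ b * m ∈ Ioo ((c : ℝ) - 1) c
    rw [hm]
    constructor <;> linarith

def HasHeavyBlock (P : Set ℕ) (N : ℕ) (ω : ℝ) : Prop :=
  ∃ a b, N ≤ a ∧ (∀ i, a ≤ i → i < b → dyadicDigit ω i = 1 → i ∈ P) ∧
    2 * Nat.count (dyadicDigit ω · = 1) a + 1 ≤ Nat.count (dyadicDigit ω · = 1) b

theorem residual_hasHeavyBlock {P : Set ℕ} (hP : P.Infinite) (N : ℕ) :
    {ω : Ioc (0:ℝ) 1 | HasHeavyBlock P N ω} ∈ residual (Ioc (0:ℝ) 1) := by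
  classical
  refine residual_of_forall_exists_dyadicCell_subset (S := {ω | HasHeavyBlock P N ω})
    fun ω t => ?_
  set a := max t N
  have hshift : {k | a + k ∈ P}.Infinite := Set.infinite_of_forall_exists_gt fun M => by
    obtain ⟨i, hiP, hi⟩ := hP.exists_gt (a + M)
    exact ⟨i - a, show a + (i - a) ∈ P by rwa [Nat.add_sub_cancel' (by omega)], by omega⟩
  -- `[a, a + n)` contains `a + 1` elements of `P`, made the selected digits there
  set n := Nat.nth (a + · ∈ P) (a + 1)
  obtain ⟨ω', hcell, hdigits⟩ := exists_dyadicCell_eq_dyadicDigits_iff ω a (· ∈ P) n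
  refine ⟨ω', a + n, by omega, dyadicCell_eq_of_le hcell (le_max_left t N), fun ω'' hω'' => ?_⟩
  have hdigits_cell : ∀ k < n, (dyadicDigit ω'' (a + k) = 1 ↔ a + k ∈ P) := fun k hk => by
    rw [dyadicDigit_eq_of_dyadicCell_eq hω'' (by omega)]
    exact hdigits k hk
  refine ⟨a, a + n, le_max_right t N, ?_, ?_⟩
  · intro i hai hib hi
    obtain ⟨k, rfl⟩ := Nat.exists_eq_add_of_le hai
    exact (hdigits_cell k (by omega)).1 hi
  · have hP_count : Nat.count (a + · ∈ P) n = a + 1 := Nat.count_nth_of_infinite hshift (a + 1)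
    have hdigit_count :
        Nat.count (a + · ∈ P) n ≤ Nat.count (fun k => dyadicDigit ω'' (a + k) = 1) n :=
      Nat.count_mono_left fun k hk hkP => (hdigits_cell k hk).2 hkP
    have hbefore : Nat.count (dyadicDigit ω'' · = 1) a ≤ a := Nat.count_le _
    rw [Nat.count_add]
    omega

open Classical in
theorem notMem_densityZero_of_blocks {K : Set ℕ}
    (hK : ∀ N, ∃ u v, N ≤ u ∧ 2 * u + 1 ≤ v ∧ ∀ k, u ≤ k → k < v → k ∈ K) :
    K ∉ densityZero := by
  intro hzero
  obtain ⟨N, hN⟩ :=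
    eventually_atTop.1 (hzero.eventually_lt_const (by norm_num : (0:ℝ) < 1 / 2))
  obtain ⟨u, v, hNu, huv, hblock⟩ := hK N
  have hcount : ((v - u : ℕ) : ℝ) ≤ ∑ i ∈ Finset.range v, if i ∈ K then (1:ℝ) else 0 :=
    calc ((v - u : ℕ) : ℝ) = ∑ i ∈ Finset.Ico u v, if i ∈ K then (1:ℝ) else 0 := by
          rw [Finset.sum_congr rfl fun i hi => if_pos (hblock i (Finset.mem_Ico.1 hi).1
            (Finset.mem_Ico.1 hi).2)]
          simp
      _ ≤ ∑ i ∈ Finset.range v, if i ∈ K then (1:ℝ) else 0 :=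
          Finset.sum_le_sum_of_subset_of_nonneg
            (fun i hi => Finset.mem_range.2 (Finset.mem_Ico.1 hi).2)
            fun _ _ _ => by split_ifs <;> norm_num
  have hv := hN v (by omega)
  rw [div_lt_iff₀ (by norm_cast; omega)] at hv
  rw [Nat.cast_sub (by omega)] at hcount
  have : (2 * u + 1 : ℝ) ≤ v := by exact_mod_cast huv
  linarith

theorem idealLimitPt_of_tendsto_inf_principal {X : Type*} [TopologicalSpace X]
    {I : Set (Set ℕ)} {y : ℕ → X} {l : X} {K : Set ℕ} (hK : K.Infinite) (hKI : K ∉ I)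
    (h : Tendsto y (atTop ⊓ 𝓟 K) (𝓝 l)) : IdealLimitPt I y l := by
  refine ⟨Nat.nth (· ∈ K), Nat.nth_strictMono hK, h.comp ?_, ?_⟩
  · exact tendsto_inf.2 ⟨(Nat.nth_strictMono hK).tendsto_atTop,
      tendsto_principal.2 (Eventually.of_forall (Nat.nth_mem_of_infinite hK))⟩
  · rwa [Nat.range_nth_of_infinite (p := (· ∈ K)) hK]

theorem idealLimitPt_densityZero_of_blocks {X : Type*} [PseudoMetricSpace X] {y : ℕ → X} {l : X}
    (h : ∀ ε > 0, ∀ N, ∃ u v, N ≤ u ∧ 2 * u + 1 ≤ v ∧ ∀ k, u ≤ k → k < v → dist (y k) l < ε) :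
    IdealLimitPt densityZero y l := by
  choose U V hNU hUV hblock using fun m : ℕ => h (1 / (m + 1)) Nat.one_div_pos_of_nat
  -- block `m` serves `ε = 1 / (m + 1)` and starts where block `m - 1` ends
  let start : ℕ → ℕ := fun m => Nat.rec 0 (fun m s => V m s) m
  set u := fun m => U m (start m)
  set v := fun m => V m (start m)
  have hvu : ∀ m, v m ≤ u (m + 1) := fun m => hNU (m + 1) (start (m + 1))
  have huv : ∀ m, 2 * u m + 1 ≤ v m := fun m => hUV m (start m)
  have hu : StrictMono u := strictMono_nat_of_lt_succ fun m => by
    have := huv m; have := hvu m; omega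
  set K := ⋃ m, Ico (u m) (v m)
  have hK : ∀ N, ∃ u' v', N ≤ u' ∧ 2 * u' + 1 ≤ v' ∧ ∀ k, u' ≤ k → k < v' → k ∈ K :=
    fun N => ⟨u N, v N, hu.id_le N, huv N, fun k h₁ h₂ => mem_iUnion.2 ⟨N, h₁, h₂⟩⟩
  have hK_inf : K.Infinite := Set.infinite_of_forall_exists_gt fun M => by
    obtain ⟨u', v', hMu, huv', hblock'⟩ := hK (M + 1)
    exact ⟨u', hblock' u' le_rfl (by omega), by omega⟩
  refine idealLimitPt_of_tendsto_inf_principal hK_inf (notMem_densityZero_of_blocks hK) ?_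
  refine Metric.tendsto_nhds.2 fun ε hε => ?_
  obtain ⟨m₀, hm₀⟩ := exists_nat_one_div_lt hε
  rw [eventually_inf_principal, eventually_atTop]
  refine ⟨u m₀, fun k hk hkK => ?_⟩
  obtain ⟨m, hmk, hkm⟩ := mem_iUnion.1 hkK
  have hm : m₀ ≤ m := by
    by_contra! hlt
    have := hu.monotone (show m + 1 ≤ m₀ by omega)
    have := hvu m
    omega
  calc dist (y k) l < 1 / (m + 1) := hblock m (start m) k hmk hkm
    _ ≤ 1 / (m₀ + 1) := Nat.one_div_le_one_div hm
    _ < ε := hm₀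

theorem IdealLimitPt.mem_limitPts {X : Type*} [TopologicalSpace X] {I : Set (Set ℕ)}
    {x : ℕ → X} {l : X} (h : IdealLimitPt I x l) : l ∈ limitPts x :=
  let ⟨k, hk, hlim, _⟩ := h
  ⟨k, hk, hlim⟩

theorem limitPts_subseq_subset {X : Type*} [TopologicalSpace X] (x : ℕ → X) (ω : ℝ) :
    limitPts (subseq x ω) ⊆ limitPts x := fun _ ⟨_, hk, hlim⟩ =>
  ⟨_, (Nat.nth_strictMono (setOf_dyadicDigit_eq_one_infinite ω)).comp hk, hlim⟩

theorem infinite_setOf_dist_lt_of_mem_limitPts {X : Type*} [PseudoMetricSpace X] {x : ℕ → X}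
    {l : X} (hl : l ∈ limitPts x) {ε : ℝ} (hε : 0 < ε) : {n | dist (x n) l < ε}.Infinite := by
  obtain ⟨k, hk, hlim⟩ := hl
  exact Nat.frequently_atTop_iff_infinite.1
    (hk.tendsto_atTop.frequently (hlim.eventually (Metric.ball_mem_nhds l hε)).frequently)

theorem limitPts_subset_idealLimitPt_subseq {x : ℕ → ℝ} {ω : ℝ}
    (hω : ∀ (q δ : ℚ) (N : ℕ), (x ⁻¹' Metric.ball (q : ℝ) δ).Infinite →
      HasHeavyBlock (x ⁻¹' Metric.ball (q : ℝ) δ) N ω) :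
    limitPts x ⊆ {l | IdealLimitPt densityZero (subseq x ω) l} := by
  intro l hl
  refine idealLimitPt_densityZero_of_blocks fun ε hε N => ?_
  obtain ⟨δ, hδ, hδε⟩ := exists_rat_btwn (half_pos hε)
  obtain ⟨q, hlq, hql⟩ := exists_rat_btwn (show l - δ < l by linarith)
  have hnear : (x ⁻¹' Metric.ball (q : ℝ) δ).Infinite :=
    (infinite_setOf_dist_lt_of_mem_limitPts hl (show (0:ℝ) < δ - (l - q) by linarith)).mono
      fun n (hn : dist (x n) l < δ - (l - q)) => show dist (x n) q < δ from
        calc dist (x n) q ≤ dist (x n) l + dist l q := dist_triangle _ _ _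
          _ < δ := by rw [Real.dist_eq l, abs_of_pos (by linarith)]; linarith
  have hones := setOf_dyadicDigit_eq_one_infinite ω
  obtain ⟨a, b, hNa, hP, hcount⟩ := hω q δ (Nat.nth (dyadicDigit ω · = 1) N) hnear
  refine ⟨Nat.count (dyadicDigit ω · = 1) a, Nat.count (dyadicDigit ω · = 1) b, ?_, hcount,
    fun k hak hkb => ?_⟩
  · calc N = Nat.count (dyadicDigit ω · = 1) (Nat.nth (dyadicDigit ω · = 1) N) :=
          (Nat.count_nth_of_infinite hones N).symm
      _ ≤ _ := Nat.count_monotone _ hNa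
  have hnear_k := hP _ ((Nat.count_le_iff_le_nth hones).1 hak)
    ((Nat.lt_nth_iff_count_lt hones).1 hkb) (Nat.nth_mem_of_infinite hones k)
  calc dist (subseq x ω k) l ≤ dist (subseq x ω k) q + dist (q : ℝ) l := dist_triangle _ _ _
    _ < ε := by
      rw [Real.dist_eq (q : ℝ), abs_of_neg (by linarith)]
      linarith [show dist (subseq x ω k) q < δ from hnear_k]

theorem residual_idealLimitPt_subseq_eq_limitPts (x : ℕ → ℝ) :
    {ω : Ioc (0:ℝ) 1 | {l | IdealLimitPt densityZero (subseq x ω) l} = limitPts x} ∈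
      residual (Ioc (0:ℝ) 1) := by
  have hgeneric : ∀ᶠ ω : Ioc (0:ℝ) 1 in residual _, ∀ (q δ : ℚ) (N : ℕ),
      (x ⁻¹' Metric.ball (q : ℝ) δ).Infinite →
        HasHeavyBlock (x ⁻¹' Metric.ball (q : ℝ) δ) N ω := by
    refine eventually_countable_forall.2 fun q => eventually_countable_forall.2 fun δ =>
      eventually_countable_forall.2 fun N => ?_
    by_cases hnear : (x ⁻¹' Metric.ball (q : ℝ) δ).Infinite
    · exact mem_of_superset (residual_hasHeavyBlock hnear N) fun _ hω _ => hω
    · exact Eventually.of_forall fun _ h => absurd h hnear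
  filter_upwards [hgeneric] with ω hω
  exact Subset.antisymm (fun _ hl => limitPts_subseq_subset x ω hl.mem_limitPts)
    (limitPts_subset_idealLimitPt_subseq hω)

theorem isMeagre_dichotomy_of_residual {X : Type*} [TopologicalSpace X] [BaireSpace X]
    [Nonempty X] {S R : Set X} {p : Prop} (hR : R ∈ residual X) (hS : ∀ ω ∈ R, ω ∈ S ↔ p) :
    (IsMeagre Sᶜ ↔ ¬ IsMeagre S) ∧ (¬ IsMeagre S ↔ p) := by
  have not_both : ¬ (IsMeagre S ∧ IsMeagre Sᶜ) := fun ⟨h, hc⟩ =>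
    not_isMeagre_of_isOpen isOpen_univ univ_nonempty (by simpa using h.union hc)
  by_cases hp : p
  · have hc : IsMeagre Sᶜ := by
      rw [IsMeagre, compl_compl]
      exact mem_of_superset hR fun ω hω => (hS ω hω).2 hp
    tauto
  · have h : IsMeagre S := mem_of_superset hR fun ω hω hωS => hp ((hS ω hω).1 hωS)
    tauto

instance : Nonempty (Ioc (0:ℝ) 1) := nonempty_Ioc_subtype zero_lt_one

/-- For a real sequence `x`, the set of `ω` preserving the statistical limit
points is comeager iff it is nonmeager, iff every ordinary limit point of `x`
is a statistical limit point of `x`. -/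
theorem statistical_limit_main (x : ℕ → ℝ) :
    (IsMeagre {ω : Set.Ioc (0:ℝ) 1 |
        {l : ℝ | IdealLimitPt densityZero (subseq x ↑ω) l} ≠
          {l : ℝ | IdealLimitPt densityZero x l}} ↔
      ¬ IsMeagre {ω : Set.Ioc (0:ℝ) 1 |
        {l : ℝ | IdealLimitPt densityZero (subseq x ↑ω) l} =
          {l : ℝ | IdealLimitPt densityZero x l}}) ∧
    (¬ IsMeagre {ω : Set.Ioc (0:ℝ) 1 |
        {l : ℝ | IdealLimitPt densityZero (subseq x ↑ω) l} =
          {l : ℝ | IdealLimitPt densityZero x l}} ↔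
      limitPts x ⊆ {l : ℝ | IdealLimitPt densityZero x l}) := by
  have hsub : {l | IdealLimitPt densityZero x l} ⊆ limitPts x := fun _ hl => hl.mem_limitPts
  refine isMeagre_dichotomy_of_residual (residual_idealLimitPt_subseq_eq_limitPts x)
    fun ω (hω : _ = _) => ?_
  show _ = _ ↔ _
  rw [hω]
  exact ⟨fun h => h.le, fun h => (Subset.antisymm hsub h).symm⟩
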